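/- arXiv:1707.01392 — 10 statements merged into one kernel-verified Lean document; each statement's English description precedes it below -/
import Mathlib

section
/- In the simplified three-player full-street Kuhn poker game with pot size P ≥ 2, no equilibrium strategy profile has b₁ = 1. (If b₁ = 1, then Player 2's best response forces c₂ = 1 and Player 3's best response forces d₃ = 1, so c₂ + d₃ = 2 > (2P−4)/(P+1), making b₁ = 1 suboptimal for Player 1.) -/
/-- A strategy profile for simplified three-player full-street Kuhn poker:
eleven betting/calling frequencies. -/
structure Profile where
  a1 : ℝ
  b1 : ℝ
  c1 : ℝ
  d1 : ℝ
  a2 : ℝ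
  b2 : ℝ
  c2 : ℝ
  d2 : ℝ
  b3 : ℝ
  c3 : ℝ
  d3 : ℝ

/-- All eleven frequencies lie in [0,1]. -/
def Profile.valid (s : Profile) : Prop :=
  s.a1 ∈ Set.Icc (0:ℝ) 1 ∧ s.b1 ∈ Set.Icc (0:ℝ) 1 ∧ s.c1 ∈ Set.Icc (0:ℝ) 1 ∧
  s.d1 ∈ Set.Icc (0:ℝ) 1 ∧ s.a2 ∈ Set.Icc (0:ℝ) 1 ∧ s.b2 ∈ Set.Icc (0:ℝ) 1 ∧
  s.c2 ∈ Set.Icc (0:ℝ) 1 ∧ s.d2 ∈ Set.Icc (0:ℝ) 1 ∧ s.b3 ∈ Set.Icc (0:ℝ) 1 ∧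
  s.c3 ∈ Set.Icc (0:ℝ) 1 ∧ s.d3 ∈ Set.Icc (0:ℝ) 1

/-- Player 1's expected profit (so that 24 E₁ equals the stated polynomial). -/
noncomputable def E1 (P : ℝ) (s : Profile) : ℝ :=
  (1 / 24) *
    ((-2 * s.b2 + 2 * s.c2 - 2 * s.b3 + 2 * s.d3 - s.b2 * s.c3) * s.a1
      + (2 * P - 4 - (P + 1) * (s.c2 + s.d3)) * s.b1
      + (s.b2 - 2 + (P + s.a2) * s.b3) * s.c1
      + ((P + 1) * s.b2 - 2 * s.a2) * s.d1
      + (2 - P) * s.b3 + (2 + s.c3 - P) * s.b2)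

/-- Player 2's expected profit (so that 24 E₂ equals the stated polynomial). -/
noncomputable def E2 (P : ℝ) (s : Profile) : ℝ :=
  (1 / 24) *
    ((2 * s.d1 + 2 * s.c3 - 2 * s.b3 - s.c1 * s.b3 - s.b1 * s.c3) * s.a2
      + (2 * P - 4 + 2 * s.a1 - (P + 1) * (s.c3 + s.d1)) * s.b2
      + (P * s.b1 - 2 * s.a1) * s.c2
      + ((P + 1) * s.b3 - 2 + s.b1) * s.d2
      + (2 - P + s.c1) * s.b3 + (2 - P) * s.b1)

/-- Player 3's expected profit (so that 24 E₃ equals the stated polynomial). -/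
noncomputable def E3 (P : ℝ) (s : Profile) : ℝ :=
  (1 / 24) *
    ((2 * P - 4 + 2 * s.a1 + 2 * s.a2 - (P + 1) * (s.c1 + s.d2)) * s.b3
      + ((P + s.a1) * s.b2 - (2 - s.b1) * s.a2) * s.c3
      + ((P + 1) * s.b1 - 2 * s.a1) * s.d3
      + (2 - P - s.c1) * s.b2 + 2 * s.c1
      + (2 - P + s.c2 - s.d2) * s.b1 + 2 * s.d2)

/-- A profile is an equilibrium if no player can increase her own expected
profit by unilaterally changing her own frequencies within [0,1]. -/
def IsEquilibrium (P : ℝ) (s : Profile) : Prop :=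
  (∀ a b c d : ℝ, a ∈ Set.Icc (0:ℝ) 1 → b ∈ Set.Icc (0:ℝ) 1 →
      c ∈ Set.Icc (0:ℝ) 1 → d ∈ Set.Icc (0:ℝ) 1 →
      E1 P { s with a1 := a, b1 := b, c1 := c, d1 := d } ≤ E1 P s) ∧
  (∀ a b c d : ℝ, a ∈ Set.Icc (0:ℝ) 1 → b ∈ Set.Icc (0:ℝ) 1 →
      c ∈ Set.Icc (0:ℝ) 1 → d ∈ Set.Icc (0:ℝ) 1 →
      E2 P { s with a2 := a, b2 := b, c2 := c, d2 := d } ≤ E2 P s) ∧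
  (∀ b c d : ℝ, b ∈ Set.Icc (0:ℝ) 1 → c ∈ Set.Icc (0:ℝ) 1 →
      d ∈ Set.Icc (0:ℝ) 1 →
      E3 P { s with b3 := b, c3 := c, d3 := d } ≤ E3 P s)

/-!
Each player's profit is affine in each of her own frequencies, so a unilateral deviation in a single
frequency changes it by (coefficient) × (change). With `b₁ = 1`, Player 3's coefficient of `d₃` is
`P + 1 - 2a₁ > 0`, forcing `d₃ = 1`, and Player 2's coefficient of `c₂` is `P - 2a₁ ≥ P - 2 ≥ 0`, which
forces `(P - 2)(1 - c₂) ≤ 0`. Player 1's coefficient of `b₁` is then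
`2P - 4 - (P + 1)(c₂ + 1) = (P + 1)(1 - c₂) - 6 ≤ 3(1 - c₂) - 6 < 0`, so she gains by folding to `b₁ = 0`.
-/

open Set

namespace Profile

variable (P : ℝ) (s : Profile)

theorem E1_update_b1_sub (b : ℝ) :
    E1 P { s with b1 := b } - E1 P s = (2 * P - 4 - (P + 1) * (s.c2 + s.d3)) * (b - s.b1) / 24 := by
  simp only [E1]; ring

theorem E2_update_c2_sub (c : ℝ) :
    E2 P { s with c2 := c } - E2 P s = (P * s.b1 - 2 * s.a1) * (c - s.c2) / 24 := by
  simp only [E2]; ring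

theorem E3_update_d3_sub (d : ℝ) :
    E3 P { s with d3 := d } - E3 P s = ((P + 1) * s.b1 - 2 * s.a1) * (d - s.d3) / 24 := by
  simp only [E3]; ring

end Profile

namespace IsEquilibrium

variable {P : ℝ} {s : Profile}

theorem b1_gain_nonpos (heq : IsEquilibrium P s) (hval : s.valid) {b : ℝ} (hb : b ∈ Icc (0 : ℝ) 1) :
    (2 * P - 4 - (P + 1) * (s.c2 + s.d3)) * (b - s.b1) ≤ 0 := by
  obtain ⟨ha1, -, hc1, hd1, -⟩ := hval
  have h := heq.1 s.a1 b s.c1 s.d1 ha1 hb hc1 hd1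
  linarith [s.E1_update_b1_sub P b]

theorem c2_gain_nonpos (heq : IsEquilibrium P s) (hval : s.valid) {c : ℝ} (hc : c ∈ Icc (0 : ℝ) 1) :
    (P * s.b1 - 2 * s.a1) * (c - s.c2) ≤ 0 := by
  obtain ⟨-, -, -, -, ha2, hb2, -, hd2, -⟩ := hval
  have h := heq.2.1 s.a2 s.b2 c s.d2 ha2 hb2 hc hd2
  linarith [s.E2_update_c2_sub P c]

theorem d3_gain_nonpos (heq : IsEquilibrium P s) (hval : s.valid) {d : ℝ} (hd : d ∈ Icc (0 : ℝ) 1) :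
    ((P + 1) * s.b1 - 2 * s.a1) * (d - s.d3) ≤ 0 := by
  obtain ⟨-, -, -, -, -, -, -, -, hb3, hc3, -⟩ := hval
  have h := heq.2.2 s.b3 s.c3 d hb3 hc3 hd
  linarith [s.E3_update_d3_sub P d]

end IsEquilibrium

theorem no_equilibrium_with_b1_eq_one (P : ℝ) (s : Profile)
    (hP : 2 ≤ P) (hval : s.valid) (heq : IsEquilibrium P s) :
    s.b1 ≠ 1 := by
  intro hb1
  have hzero : (0 : ℝ) ∈ Icc (0 : ℝ) 1 := left_mem_Icc.mpr zero_le_one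
  have hone : (1 : ℝ) ∈ Icc (0 : ℝ) 1 := right_mem_Icc.mpr zero_le_one
  have hb1_gain := heq.b1_gain_nonpos hval hzero
  have hc2_gain := heq.c2_gain_nonpos hval hone
  have hd3_gain := heq.d3_gain_nonpos hval hone
  obtain ⟨⟨-, ha1⟩, -, -, -, -, -, ⟨hc2₀, hc2₁⟩, -, -, -, ⟨-, hd3⟩⟩ := hval
  rw [hb1] at hb1_gain hc2_gain hd3_gain
  have hd3_eq : s.d3 = 1 := by nlinarith
  have hc2 : (P - 2) * (1 - s.c2) ≤ 0 := by nlinarith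
  rw [hd3_eq] at hb1_gain
  nlinarith
end

section
/- In the simplified three-player full-street Kuhn poker game with pot size P ≥ 2, no equilibrium strategy profile has b₂ = 1. (If b₂ = 1, then Player 3's best response forces c₃ = 1 and Player 1's best response forces d₁ = 1, so c₃ + d₁ = 2 > (2P−4+2a₁)/(P+1), making b₂ = 1 suboptimal for Player 2.) -/
/-!
Suppose `b₂ = 1`. Then Player 1's payoff has slope `(P + 1) - 2a₂ > 0` in `d₁`, so `d₁ = 1`,
and Player 2 not preferring `b₂ = 0` reads `(P + 1)(c₃ + 1) ≤ 2P - 4 + 2a₁`, which forces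
`c₃ < 1`. Player 3 then must have a nonpositive slope `P + a₁ - (2 - b₁)a₂` in `c₃`, i.e.
`P + a₁ ≤ 2`; but then `(P + 1)(c₃ + 1) ≤ 2(P + a₁) - 4 ≤ 0`, which is absurd.
-/

open Set

namespace Profile

variable (P : ℝ) (s : Profile)

-- `24 ∂E₁/∂d₁`, `24 ∂E₂/∂b₂` and `24 ∂E₃/∂c₃`: each payoff is affine in these frequencies.
def gainD1 : ℝ := (P + 1) * s.b2 - 2 * s.a2

def gainB2 : ℝ := 2 * P - 4 + 2 * s.a1 - (P + 1) * (s.c3 + s.d1)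

def gainC3 : ℝ := (P + s.a1) * s.b2 - (2 - s.b1) * s.a2

lemma E1_update_d1 (d : ℝ) :
    E1 P { s with a1 := s.a1, b1 := s.b1, c1 := s.c1, d1 := d } =
      E1 P s + s.gainD1 P * (d - s.d1) / 24 := by
  simp only [E1, gainD1]
  ring

lemma E2_update_b2 (b : ℝ) :
    E2 P { s with a2 := s.a2, b2 := b, c2 := s.c2, d2 := s.d2 } =
      E2 P s + s.gainB2 P * (b - s.b2) / 24 := by
  simp only [E2, gainB2]
  ring

lemma E3_update_c3 (c : ℝ) :
    E3 P { s with b3 := s.b3, c3 := c, d3 := s.d3 } =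
      E3 P s + s.gainC3 P * (c - s.c3) / 24 := by
  simp only [E3, gainC3]
  ring

end Profile

namespace IsEquilibrium

variable {P : ℝ} {s : Profile} (heq : IsEquilibrium P s) (hs : s.valid)
include heq hs

lemma gainD1_mul_sub_nonpos {d : ℝ} (hd : d ∈ Icc (0 : ℝ) 1) :
    s.gainD1 P * (d - s.d1) ≤ 0 := by
  obtain ⟨ha1, hb1, hc1, -⟩ := hs
  have h := heq.1 s.a1 s.b1 s.c1 d ha1 hb1 hc1 hd
  rw [s.E1_update_d1 P d] at h
  linarith

lemma gainB2_mul_sub_nonpos {b : ℝ} (hb : b ∈ Icc (0 : ℝ) 1) :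
    s.gainB2 P * (b - s.b2) ≤ 0 := by
  obtain ⟨-, -, -, -, ha2, -, hc2, hd2, -⟩ := hs
  have h := heq.2.1 s.a2 b s.c2 s.d2 ha2 hb hc2 hd2
  rw [s.E2_update_b2 P b] at h
  linarith

lemma gainC3_mul_sub_nonpos {c : ℝ} (hc : c ∈ Icc (0 : ℝ) 1) :
    s.gainC3 P * (c - s.c3) ≤ 0 := by
  obtain ⟨-, -, -, -, -, -, -, -, hb3, -, hd3⟩ := hs
  have h := heq.2.2 s.b3 c s.d3 hb3 hc hd3
  rw [s.E3_update_c3 P c] at h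
  linarith

end IsEquilibrium

theorem no_equilibrium_with_b2_eq_one (P : ℝ) (s : Profile)
    (hP : 2 ≤ P) (hval : s.valid) (heq : IsEquilibrium P s) :
    s.b2 ≠ 1 := by
  intro hb2
  have h0 : (0 : ℝ) ∈ Icc (0 : ℝ) 1 := ⟨le_rfl, zero_le_one⟩
  have h1 : (1 : ℝ) ∈ Icc (0 : ℝ) 1 := ⟨zero_le_one, le_rfl⟩
  have ⟨ha1, hb1, _, hd1, ha2, _, _, _, _, hc3, _⟩ := hval
  have hd1_eq : s.d1 = 1 := by
    have hD1 : 0 < s.gainD1 P := by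
      simp only [Profile.gainD1, hb2]
      linarith [ha2.2]
    have := nonpos_of_mul_nonpos_right (heq.gainD1_mul_sub_nonpos hval h1) hD1
    linarith [hd1.2]
  have hB2 : (P + 1) * (s.c3 + 1) ≤ 2 * P - 4 + 2 * s.a1 := by
    have h := heq.gainB2_mul_sub_nonpos hval h0
    simp only [Profile.gainB2, hb2, hd1_eq] at h
    linarith
  have hc3_lt : s.c3 < 1 := by nlinarith [ha1.2]
  have hC3 : P + s.a1 ≤ 2 := by
    have h := heq.gainC3_mul_sub_nonpos hval h1
    have hC3 : s.gainC3 P ≤ 0 := nonpos_of_mul_nonpos_left h (by linarith)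
    simp only [Profile.gainC3, hb2] at hC3
    nlinarith [hb1.1, ha2.1, ha2.2]
  nlinarith [hc3.1]
end

section
/- In the simplified three-player full-street Kuhn poker game with pot size P ≥ 2, every equilibrium strategy profile satisfies either (a₁ = 0 and b₁ = 0) or (a₁ > 0 and b₁ > 0); that is, Player 1's value bets with A must be balanced by bluffs with Q and vice versa. -/
/-! Each equilibrium frequency maximises `y ↦ k * y` on `[0, 1]`, where `k` is its coefficient in
its owner's profit, so it is `1` when `k > 0` and `0` when `k < 0`. If `a₁ = 0 < b₁`, the
coefficients of `c₂` and `d₃` are positive, so `c₂ = d₃ = 1`, and then `b₁` has coefficient `-6`.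
If `b₁ = 0 < a₁`, those coefficients are negative, so `c₂ = d₃ = 0`; as `a₁ > 0` its coefficient
`-2b₂ - 2b₃ - b₂c₃` is nonnegative, forcing `b₂ = b₃ = 0`. Then `c₁ = d₂ = 0` (coefficients `-2`),
and `b₃ = 0` although its coefficient `2P - 4 + 2a₁ + 2a₂` is positive. -/

open Set

namespace IsMaxOn

variable {k x : ℝ} (h : IsMaxOn (k * ·) (Icc 0 1) x)
include h

theorem slope_nonneg_of_pos (hx : 0 < x) : 0 ≤ k := by
  have := isMaxOn_iff.1 h 0 (left_mem_Icc.2 zero_le_one)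
  simp only [mul_zero] at this
  exact nonneg_of_mul_nonneg_left this hx

theorem slope_nonpos_of_lt_one (hx : x < 1) : k ≤ 0 := by
  have := isMaxOn_iff.1 h 1 (right_mem_Icc.2 zero_le_one)
  nlinarith

theorem eq_one_of_slope_pos (hx : x ≤ 1) (hk : 0 < k) : x = 1 :=
  hx.eq_or_lt.resolve_right fun hx1 => (h.slope_nonpos_of_lt_one hx1).not_gt hk

theorem eq_zero_of_slope_neg (hx : 0 ≤ x) (hk : k < 0) : x = 0 :=
  (hx.eq_or_lt.resolve_right fun hx0 => (h.slope_nonneg_of_pos hx0).not_gt hk).symm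

end IsMaxOn

namespace IsEquilibrium

variable {P : ℝ} {s : Profile} (heq : IsEquilibrium P s) (hval : s.valid)
include heq hval

theorem isMaxOn_a1 :
    IsMaxOn ((-2 * s.b2 + 2 * s.c2 - 2 * s.b3 + 2 * s.d3 - s.b2 * s.c3) * ·) (Icc 0 1) s.a1 := by
  obtain ⟨-, hb1, hc1, hd1, -⟩ := hval
  refine isMaxOn_iff.2 fun y hy => ?_
  have := heq.1 y s.b1 s.c1 s.d1 hy hb1 hc1 hd1
  simp only [E1] at this
  linarith

theorem isMaxOn_b1 : IsMaxOn ((2 * P - 4 - (P + 1) * (s.c2 + s.d3)) * ·) (Icc 0 1) s.b1 := by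
  obtain ⟨ha1, -, hc1, hd1, -⟩ := hval
  refine isMaxOn_iff.2 fun y hy => ?_
  have := heq.1 s.a1 y s.c1 s.d1 ha1 hy hc1 hd1
  simp only [E1] at this
  linarith

theorem isMaxOn_c1 : IsMaxOn ((s.b2 - 2 + (P + s.a2) * s.b3) * ·) (Icc 0 1) s.c1 := by
  obtain ⟨ha1, hb1, -, hd1, -⟩ := hval
  refine isMaxOn_iff.2 fun y hy => ?_
  have := heq.1 s.a1 s.b1 y s.d1 ha1 hb1 hy hd1
  simp only [E1] at this
  linarith

theorem isMaxOn_c2 : IsMaxOn ((P * s.b1 - 2 * s.a1) * ·) (Icc 0 1) s.c2 := by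
  obtain ⟨-, -, -, -, ha2, hb2, -, hd2, -⟩ := hval
  refine isMaxOn_iff.2 fun y hy => ?_
  have := heq.2.1 s.a2 s.b2 y s.d2 ha2 hb2 hy hd2
  simp only [E2] at this
  linarith

theorem isMaxOn_d2 : IsMaxOn (((P + 1) * s.b3 - 2 + s.b1) * ·) (Icc 0 1) s.d2 := by
  obtain ⟨-, -, -, -, ha2, hb2, hc2, -⟩ := hval
  refine isMaxOn_iff.2 fun y hy => ?_
  have := heq.2.1 s.a2 s.b2 s.c2 y ha2 hb2 hc2 hy
  simp only [E2] at this
  linarith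

theorem isMaxOn_b3 :
    IsMaxOn ((2 * P - 4 + 2 * s.a1 + 2 * s.a2 - (P + 1) * (s.c1 + s.d2)) * ·) (Icc 0 1) s.b3 := by
  obtain ⟨-, -, -, -, -, -, -, -, -, hc3, hd3⟩ := hval
  refine isMaxOn_iff.2 fun y hy => ?_
  have := heq.2.2 y s.c3 s.d3 hy hc3 hd3
  simp only [E3] at this
  linarith

theorem isMaxOn_d3 : IsMaxOn (((P + 1) * s.b1 - 2 * s.a1) * ·) (Icc 0 1) s.d3 := by
  obtain ⟨-, -, -, -, -, -, -, -, hb3, hc3, -⟩ := hval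
  refine isMaxOn_iff.2 fun y hy => ?_
  have := heq.2.2 s.b3 s.c3 y hb3 hc3 hy
  simp only [E3] at this
  linarith

theorem b1_eq_zero_of_a1_eq_zero (hP : 0 < P) (ha1 : s.a1 = 0) : s.b1 = 0 := by
  have ⟨_, hb1, _, _, _, _, hc2, _, _, _, hd3⟩ := hval
  by_contra hb1_ne
  have hb1_pos : 0 < s.b1 := hb1.1.lt_of_ne' hb1_ne
  have hc2_eq : s.c2 = 1 :=
    (heq.isMaxOn_c2 hval).eq_one_of_slope_pos hc2.2 (by rw [ha1]; nlinarith)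
  have hd3_eq : s.d3 = 1 :=
    (heq.isMaxOn_d3 hval).eq_one_of_slope_pos hd3.2 (by rw [ha1]; nlinarith)
  have := (heq.isMaxOn_b1 hval).slope_nonneg_of_pos hb1_pos
  rw [hc2_eq, hd3_eq] at this
  linarith

theorem a1_eq_zero_of_b1_eq_zero (hP : 2 ≤ P) (hb1 : s.b1 = 0) : s.a1 = 0 := by
  have ⟨ha1, _, hc1, _, ha2, hb2, hc2, hd2, hb3, hc3, hd3⟩ := hval
  by_contra ha1_ne
  have ha1_pos : 0 < s.a1 := ha1.1.lt_of_ne' ha1_ne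
  have hc2_eq : s.c2 = 0 :=
    (heq.isMaxOn_c2 hval).eq_zero_of_slope_neg hc2.1 (by rw [hb1]; linarith)
  have hd3_eq : s.d3 = 0 :=
    (heq.isMaxOn_d3 hval).eq_zero_of_slope_neg hd3.1 (by rw [hb1]; linarith)
  have hbet := (heq.isMaxOn_a1 hval).slope_nonneg_of_pos ha1_pos
  rw [hc2_eq, hd3_eq] at hbet
  have hb2c3 := mul_nonneg hb2.1 hc3.1
  have hb2_eq : s.b2 = 0 := by linarith [hb2.1, hb3.1]
  have hb3_eq : s.b3 = 0 := by linarith [hb2.1, hb3.1]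
  have hc1_eq : s.c1 = 0 :=
    (heq.isMaxOn_c1 hval).eq_zero_of_slope_neg hc1.1 (by rw [hb2_eq, hb3_eq]; linarith)
  have hd2_eq : s.d2 = 0 :=
    (heq.isMaxOn_d2 hval).eq_zero_of_slope_neg hd2.1 (by rw [hb1, hb3_eq]; linarith)
  have := (heq.isMaxOn_b3 hval).slope_nonpos_of_lt_one (by rw [hb3_eq]; exact zero_lt_one)
  rw [hc1_eq, hd2_eq] at this
  linarith [ha2.1]

end IsEquilibrium

theorem equilibrium_player1_balanced (P : ℝ) (s : Profile)
    (hP : 2 ≤ P) (hval : s.valid) (heq : IsEquilibrium P s) :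
    (s.a1 = 0 ∧ s.b1 = 0) ∨ (0 < s.a1 ∧ 0 < s.b1) := by
  rcases hval.1.1.eq_or_lt with ha1 | ha1
  · exact .inl ⟨ha1.symm, heq.b1_eq_zero_of_a1_eq_zero hval (by linarith) ha1.symm⟩
  · refine .inr ⟨ha1, hval.2.1.1.lt_of_ne' fun hb1 => ?_⟩
    exact ha1.ne' (heq.a1_eq_zero_of_b1_eq_zero hval hP hb1)
end

section
/- (Solution 1a) In the simplified three-player full-street Kuhn poker game with pot size P = 2, every strategy profile with a₁ = b₁ = a₂ = b₂ = 0, 0 ≤ b₃ ≤ 2/3, c₁ = d₂ = 0, c₃ + d₁ ≤ b₃ and c₂ + d₃ ≤ b₃ is an equilibrium. -/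
/-!
Each expected profit is affine in its owner's frequencies, so a profile is an equilibrium as soon
as every frequency a player sets to 0 has nonpositive marginal value and every other one has
marginal value 0. At P = 2 with a₁ = b₁ = a₂ = b₂ = c₁ = d₂ = 0 the marginal values (times 24)
are 2(c₂ + d₃ - b₃), -3(c₂ + d₃), 2(b₃ - 1), 0 for player 1 and 2(c₃ + d₁ - b₃), -3(c₃ + d₁), 0,
3b₃ - 2 for player 2, while player 3's all vanish. The constraints c₂ + d₃ ≤ b₃, c₃ + d₁ ≤ b₃ and
b₃ ≤ 2/3 are exactly the required signs.
-/

section Update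

variable (P : ℝ) (s : Profile)

theorem E1_update (a b c d : ℝ) :
    E1 P { s with a1 := a, b1 := b, c1 := c, d1 := d } = E1 P s + (1 / 24) *
      ((-2 * s.b2 + 2 * s.c2 - 2 * s.b3 + 2 * s.d3 - s.b2 * s.c3) * (a - s.a1)
        + (2 * P - 4 - (P + 1) * (s.c2 + s.d3)) * (b - s.b1)
        + (s.b2 - 2 + (P + s.a2) * s.b3) * (c - s.c1)
        + ((P + 1) * s.b2 - 2 * s.a2) * (d - s.d1)) := by
  simp only [E1]
  ring

theorem E2_update (a b c d : ℝ) :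
    E2 P { s with a2 := a, b2 := b, c2 := c, d2 := d } = E2 P s + (1 / 24) *
      ((2 * s.d1 + 2 * s.c3 - 2 * s.b3 - s.c1 * s.b3 - s.b1 * s.c3) * (a - s.a2)
        + (2 * P - 4 + 2 * s.a1 - (P + 1) * (s.c3 + s.d1)) * (b - s.b2)
        + (P * s.b1 - 2 * s.a1) * (c - s.c2)
        + ((P + 1) * s.b3 - 2 + s.b1) * (d - s.d2)) := by
  simp only [E2]
  ring

theorem E3_update (b c d : ℝ) :
    E3 P { s with b3 := b, c3 := c, d3 := d } = E3 P s + (1 / 24) *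
      ((2 * P - 4 + 2 * s.a1 + 2 * s.a2 - (P + 1) * (s.c1 + s.d2)) * (b - s.b3)
        + ((P + s.a1) * s.b2 - (2 - s.b1) * s.a2) * (c - s.c3)
        + ((P + 1) * s.b1 - 2 * s.a1) * (d - s.d3)) := by
  simp only [E3]
  ring

end Update

section PotTwo

variable {s : Profile}

theorem E1_update_le (ha1 : s.a1 = 0) (hb1 : s.b1 = 0) (hc1 : s.c1 = 0) (ha2 : s.a2 = 0)
    (hb2 : s.b2 = 0) (hc2 : 0 ≤ s.c2) (hd3 : 0 ≤ s.d3) (hb3 : s.b3 ≤ 1)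
    (h23 : s.c2 + s.d3 ≤ s.b3) {a b c : ℝ} (ha : 0 ≤ a) (hb : 0 ≤ b) (hc : 0 ≤ c) (d : ℝ) :
    E1 2 { s with a1 := a, b1 := b, c1 := c, d1 := d } ≤ E1 2 s := by
  have hgain : E1 2 { s with a1 := a, b1 := b, c1 := c, d1 := d } = E1 2 s + (1 / 24) *
      (2 * (s.c2 + s.d3 - s.b3) * a - 3 * (s.c2 + s.d3) * b + 2 * (s.b3 - 1) * c) := by
    rw [E1_update, ha1, hb1, hc1, ha2, hb2]
    ring
  have hA := mul_nonpos_of_nonpos_of_nonneg (by linarith : 2 * (s.c2 + s.d3 - s.b3) ≤ 0) ha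
  have hB := mul_nonneg (by linarith : 0 ≤ 3 * (s.c2 + s.d3)) hb
  have hC := mul_nonpos_of_nonpos_of_nonneg (by linarith : 2 * (s.b3 - 1) ≤ 0) hc
  linarith

theorem E2_update_le (ha1 : s.a1 = 0) (hb1 : s.b1 = 0) (hc1 : s.c1 = 0) (ha2 : s.a2 = 0)
    (hb2 : s.b2 = 0) (hd2 : s.d2 = 0) (hc3 : 0 ≤ s.c3) (hd1 : 0 ≤ s.d1) (hb3 : s.b3 ≤ 2 / 3)
    (h31 : s.c3 + s.d1 ≤ s.b3) {a b d : ℝ} (ha : 0 ≤ a) (hb : 0 ≤ b) (c : ℝ) (hd : 0 ≤ d) :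
    E2 2 { s with a2 := a, b2 := b, c2 := c, d2 := d } ≤ E2 2 s := by
  have hgain : E2 2 { s with a2 := a, b2 := b, c2 := c, d2 := d } = E2 2 s + (1 / 24) *
      (2 * (s.c3 + s.d1 - s.b3) * a - 3 * (s.c3 + s.d1) * b + (3 * s.b3 - 2) * d) := by
    rw [E2_update, ha1, hb1, hc1, ha2, hb2, hd2]
    ring
  have hA := mul_nonpos_of_nonpos_of_nonneg (by linarith : 2 * (s.c3 + s.d1 - s.b3) ≤ 0) ha
  have hB := mul_nonneg (by linarith : 0 ≤ 3 * (s.c3 + s.d1)) hb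
  have hD := mul_nonpos_of_nonpos_of_nonneg (by linarith : 3 * s.b3 - 2 ≤ 0) hd
  linarith

theorem E3_update_eq (ha1 : s.a1 = 0) (hb1 : s.b1 = 0) (hc1 : s.c1 = 0) (ha2 : s.a2 = 0)
    (hb2 : s.b2 = 0) (hd2 : s.d2 = 0) (b c d : ℝ) :
    E3 2 { s with b3 := b, c3 := c, d3 := d } = E3 2 s := by
  rw [E3_update, ha1, hb1, hc1, ha2, hb2, hd2]
  ring

end PotTwo

theorem solution_1a_is_equilibrium_general (P : ℝ) (s : Profile)
    (hP : P = 2) (hval : s.valid)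
    (ha1 : s.a1 = 0) (hb1 : s.b1 = 0) (ha2 : s.a2 = 0) (hb2 : s.b2 = 0)
    (hb3u : s.b3 ≤ 2 / 3)
    (hc1 : s.c1 = 0) (hd2 : s.d2 = 0)
    (h31 : s.c3 + s.d1 ≤ s.b3) (h23 : s.c2 + s.d3 ≤ s.b3) :
    IsEquilibrium P s := by
  obtain ⟨-, -, -, hd1, -, -, hc2, -, hb3, hc3, hd3⟩ := hval
  subst hP
  refine ⟨fun a b c d ha hb hc _ => ?_, fun a b c d ha hb _ hd => ?_, fun b c d _ _ _ => ?_⟩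
  · exact E1_update_le ha1 hb1 hc1 ha2 hb2 hc2.1 hd3.1 hb3.2 h23 ha.1 hb.1 hc.1 d
  · exact E2_update_le ha1 hb1 hc1 ha2 hb2 hd2 hc3.1 hd1.1 hb3u h31 ha.1 hb.1 c hd.1
  · exact (E3_update_eq ha1 hb1 hc1 ha2 hb2 hd2 b c d).le

theorem solution_1a_is_equilibrium (P : ℝ) (s : Profile)
    (hP : P = 2) (hval : s.valid)
    (ha1 : s.a1 = 0) (hb1 : s.b1 = 0) (ha2 : s.a2 = 0) (hb2 : s.b2 = 0)
    (hb3l : 0 ≤ s.b3) (hb3u : s.b3 ≤ 2 / 3)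
    (hc1 : s.c1 = 0) (hd2 : s.d2 = 0)
    (h31 : s.c3 + s.d1 ≤ s.b3) (h23 : s.c2 + s.d3 ≤ s.b3) :
    IsEquilibrium P s :=
  solution_1a_is_equilibrium_general P s hP hval ha1 hb1 ha2 hb2 hb3u hc1 hd2 h31 h23
end

section
/- (Solution 2) In the simplified three-player full-street Kuhn poker game with pot size 3 ≤ P ≤ (3+√15)/2, every strategy profile with a₁ = b₁ = 0, a₂ = 1/2, b₂ = 1/(P+1), b₃ = 2/(P+1), c₁ = 2P−6, d₂ = (3+6P−2P²)/(P+1), c₃ = 0, d₁ = (2P−4)/(P+1) and (2P−4)/(P+1) ≤ c₂ + d₃ ≤ 3/(P+1) is an equilibrium. -/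
/-!
Each player's expected profit is affine in her own frequencies, with coefficients that depend only
on the other players' frequencies. At this profile every coefficient of Player 2 vanishes, as do
those of c₁, d₁ (Player 1) and of b₃, d₃ (Player 3). The remaining frequencies a₁, b₁ and c₃ are
played at 0, and their coefficients are 2(c₂ + d₃) − 6/(P+1), 2P − 4 − (P+1)(c₂ + d₃) and
−1/(P+1): the window imposed on c₂ + d₃ is exactly what makes the first two nonpositive.
-/

section Deviation

variable (P : ℝ) (s : Profile)

theorem E1_update_sub (a b c d : ℝ) :
    E1 P { s with a1 := a, b1 := b, c1 := c, d1 := d } - E1 P s =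
      ((-2 * s.b2 + 2 * s.c2 - 2 * s.b3 + 2 * s.d3 - s.b2 * s.c3) * (a - s.a1)
        + (2 * P - 4 - (P + 1) * (s.c2 + s.d3)) * (b - s.b1)
        + (s.b2 - 2 + (P + s.a2) * s.b3) * (c - s.c1)
        + ((P + 1) * s.b2 - 2 * s.a2) * (d - s.d1)) / 24 := by
  simp only [E1]
  ring

theorem E2_update_sub (a b c d : ℝ) :
    E2 P { s with a2 := a, b2 := b, c2 := c, d2 := d } - E2 P s =
      ((2 * s.d1 + 2 * s.c3 - 2 * s.b3 - s.c1 * s.b3 - s.b1 * s.c3) * (a - s.a2)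
        + (2 * P - 4 + 2 * s.a1 - (P + 1) * (s.c3 + s.d1)) * (b - s.b2)
        + (P * s.b1 - 2 * s.a1) * (c - s.c2)
        + ((P + 1) * s.b3 - 2 + s.b1) * (d - s.d2)) / 24 := by
  simp only [E2]
  ring

theorem E3_update_sub (b c d : ℝ) :
    E3 P { s with b3 := b, c3 := c, d3 := d } - E3 P s =
      ((2 * P - 4 + 2 * s.a1 + 2 * s.a2 - (P + 1) * (s.c1 + s.d2)) * (b - s.b3)
        + ((P + s.a1) * s.b2 - (2 - s.b1) * s.a2) * (c - s.c3)
        + ((P + 1) * s.b1 - 2 * s.a1) * (d - s.d3)) / 24 := by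
  simp only [E3]
  ring

end Deviation

section Solution2

variable {P : ℝ} {s : Profile}

theorem E1_update_le_of_solution2 (hP : 0 < P + 1) (ha1 : s.a1 = 0) (hb1 : s.b1 = 0)
    (ha2 : s.a2 = 1 / 2) (hb2 : s.b2 = 1 / (P + 1)) (hb3 : s.b3 = 2 / (P + 1)) (hc3 : s.c3 = 0)
    (h23l : (2 * P - 4) / (P + 1) ≤ s.c2 + s.d3) (h23u : s.c2 + s.d3 ≤ 3 / (P + 1))
    {a b : ℝ} (ha : 0 ≤ a) (hb : 0 ≤ b) (c d : ℝ) :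
    E1 P { s with a1 := a, b1 := b, c1 := c, d1 := d } ≤ E1 P s := by
  have hcoeff_a : 2 * (s.c2 + s.d3 - 3 / (P + 1)) ≤ 0 := by linarith
  have hcoeff_b : 2 * P - 4 - (P + 1) * (s.c2 + s.d3) ≤ 0 := by
    rw [div_le_iff₀' hP] at h23l
    linarith
  have hgain : E1 P { s with a1 := a, b1 := b, c1 := c, d1 := d } - E1 P s =
      (2 * (s.c2 + s.d3 - 3 / (P + 1)) * a + (2 * P - 4 - (P + 1) * (s.c2 + s.d3)) * b) / 24 := by
    rw [E1_update_sub, ha1, hb1, ha2, hb2, hb3, hc3]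
    field_simp
    ring
  rw [← sub_nonpos, hgain]
  have := add_nonpos (mul_nonpos_of_nonpos_of_nonneg hcoeff_a ha)
    (mul_nonpos_of_nonpos_of_nonneg hcoeff_b hb)
  linarith

theorem E2_update_eq_of_solution2 (hP : 0 < P + 1) (ha1 : s.a1 = 0) (hb1 : s.b1 = 0)
    (hb3 : s.b3 = 2 / (P + 1)) (hc1 : s.c1 = 2 * P - 6) (hc3 : s.c3 = 0)
    (hd1 : s.d1 = (2 * P - 4) / (P + 1)) (a b c d : ℝ) :
    E2 P { s with a2 := a, b2 := b, c2 := c, d2 := d } = E2 P s := by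
  rw [← sub_eq_zero, E2_update_sub, ha1, hb1, hb3, hc1, hc3, hd1]
  field_simp
  ring

theorem E3_update_le_of_solution2 (hP : 0 < P + 1) (ha1 : s.a1 = 0) (hb1 : s.b1 = 0)
    (ha2 : s.a2 = 1 / 2) (hb2 : s.b2 = 1 / (P + 1)) (hc1 : s.c1 = 2 * P - 6)
    (hd2 : s.d2 = (3 + 6 * P - 2 * P ^ 2) / (P + 1)) (hc3 : s.c3 = 0)
    (b : ℝ) {c : ℝ} (hc : 0 ≤ c) (d : ℝ) :
    E3 P { s with b3 := b, c3 := c, d3 := d } ≤ E3 P s := by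
  have hgain : E3 P { s with b3 := b, c3 := c, d3 := d } - E3 P s = -(c / (P + 1)) / 24 := by
    rw [E3_update_sub, ha1, hb1, ha2, hb2, hc1, hd2, hc3]
    field_simp
    ring
  rw [← sub_nonpos, hgain]
  have : 0 ≤ c / (P + 1) := div_nonneg hc hP.le
  linarith

end Solution2

theorem solution_2_is_equilibrium_general (P : ℝ) (s : Profile)
    (hP3 : 3 ≤ P)
    (ha1 : s.a1 = 0) (hb1 : s.b1 = 0)
    (ha2 : s.a2 = 1 / 2) (hb2 : s.b2 = 1 / (P + 1)) (hb3 : s.b3 = 2 / (P + 1))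
    (hc1 : s.c1 = 2 * P - 6) (hd2 : s.d2 = (3 + 6 * P - 2 * P ^ 2) / (P + 1))
    (hc3 : s.c3 = 0) (hd1 : s.d1 = (2 * P - 4) / (P + 1))
    (h23l : (2 * P - 4) / (P + 1) ≤ s.c2 + s.d3) (h23u : s.c2 + s.d3 ≤ 3 / (P + 1)) :
    IsEquilibrium P s := by
  have hP : 0 < P + 1 := by linarith
  refine ⟨fun a b c d ha hb _ _ => ?_, fun a b c d _ _ _ _ => ?_, fun b c d _ hc _ => ?_⟩
  · exact E1_update_le_of_solution2 hP ha1 hb1 ha2 hb2 hb3 hc3 h23l h23u ha.1 hb.1 c d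
  · exact (E2_update_eq_of_solution2 hP ha1 hb1 hb3 hc1 hc3 hd1 a b c d).le
  · exact E3_update_le_of_solution2 hP ha1 hb1 ha2 hb2 hc1 hd2 hc3 b hc.1 d

theorem solution_2_is_equilibrium (P : ℝ) (s : Profile)
    (hP3 : 3 ≤ P) (hP4 : P ≤ (3 + Real.sqrt 15) / 2) (hval : s.valid)
    (ha1 : s.a1 = 0) (hb1 : s.b1 = 0)
    (ha2 : s.a2 = 1 / 2) (hb2 : s.b2 = 1 / (P + 1)) (hb3 : s.b3 = 2 / (P + 1))
    (hc1 : s.c1 = 2 * P - 6) (hd2 : s.d2 = (3 + 6 * P - 2 * P ^ 2) / (P + 1))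
    (hc3 : s.c3 = 0) (hd1 : s.d1 = (2 * P - 4) / (P + 1))
    (h23l : (2 * P - 4) / (P + 1) ≤ s.c2 + s.d3) (h23u : s.c2 + s.d3 ≤ 3 / (P + 1)) :
    IsEquilibrium P s :=
  solution_2_is_equilibrium_general P s hP3 ha1 hb1 ha2 hb2 hb3 hc1 hd2 hc3 hd1 h23l h23u
end

section
/- (Solution 5) In the simplified three-player full-street Kuhn poker game with pot size 7/2 ≤ P ≤ 4, every strategy profile with a₁ = b₁ = 0, a₂ = 1, b₂ = 2/(P+1), b₃ = 2/(P+1), c₁ = 1, d₂ = (P−3)/(P+1), c₃ = 0, d₁ = (2P−4)/(P+1) and (2P−4)/(P+1) ≤ c₂ + d₃ ≤ 4/(P+1) is an equilibrium. -/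
/-!
Each expected profit is affine in the player's own frequencies, so a profile is an
equilibrium as soon as every own frequency sits at the end of `[0, 1]` that its coefficient
favours, or that coefficient vanishes. At Solution 5 the only nonzero coefficients are those
of `a₁, b₁, c₁` (player 1), `a₂` (player 2) and `c₃` (player 3); the two bounds on `c₂ + d₃`
give the signs of the `a₁` and `b₁` coefficients, and `P ≥ 7/2` that of the `a₂` coefficient.
-/

open Set

structure IsSolution5 (P : ℝ) (s : Profile) : Prop where
  pot_ge : 7 / 2 ≤ P
  a1_eq : s.a1 = 0
  b1_eq : s.b1 = 0
  c1_eq : s.c1 = 1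
  d1_eq : s.d1 = (2 * P - 4) / (P + 1)
  a2_eq : s.a2 = 1
  b2_eq : s.b2 = 2 / (P + 1)
  d2_eq : s.d2 = (P - 3) / (P + 1)
  b3_eq : s.b3 = 2 / (P + 1)
  c3_eq : s.c3 = 0
  le_c2_add_d3 : (2 * P - 4) / (P + 1) ≤ s.c2 + s.d3
  c2_add_d3_le : s.c2 + s.d3 ≤ 4 / (P + 1)

namespace IsSolution5

variable {P : ℝ} {s : Profile} (h : IsSolution5 P s)
include h

lemma pot_add_one_pos : 0 < P + 1 := by
  linarith [h.pot_ge]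

lemma E1_sub_E1_update (a b c d : ℝ) :
    E1 P s - E1 P { s with a1 := a, b1 := b, c1 := c, d1 := d } =
      (a * (8 - 2 * ((P + 1) * (s.c2 + s.d3)))
        + b * (P + 1) * ((P + 1) * (s.c2 + s.d3) - (2 * P - 4)) + 2 * (1 - c))
        / (24 * (P + 1)) := by
  have := h.pot_add_one_pos.ne'
  simp only [E1, h.a1_eq, h.b1_eq, h.c1_eq, h.a2_eq, h.b2_eq, h.b3_eq, h.c3_eq]
  field_simp
  ring

lemma E1_update_le {a b c d : ℝ} (ha : a ∈ Icc (0 : ℝ) 1) (hb : b ∈ Icc (0 : ℝ) 1)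
    (hc : c ∈ Icc (0 : ℝ) 1) :
    E1 P { s with a1 := a, b1 := b, c1 := c, d1 := d } ≤ E1 P s := by
  have hq := h.pot_add_one_pos
  have hupper : (P + 1) * (s.c2 + s.d3) ≤ 4 := by
    have := (le_div_iff₀ hq).mp h.c2_add_d3_le
    linarith
  have hlower : 2 * P - 4 ≤ (P + 1) * (s.c2 + s.d3) := by
    have := (div_le_iff₀ hq).mp h.le_c2_add_d3
    linarith
  rw [← sub_nonneg, h.E1_sub_E1_update]
  have hA : 0 ≤ a * (8 - 2 * ((P + 1) * (s.c2 + s.d3))) := mul_nonneg ha.1 (by linarith)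
  have hB : 0 ≤ b * (P + 1) * ((P + 1) * (s.c2 + s.d3) - (2 * P - 4)) :=
    mul_nonneg (mul_nonneg hb.1 hq.le) (by linarith)
  exact div_nonneg (by linarith [hc.2]) (by linarith)

lemma E2_sub_E2_update (a b c d : ℝ) :
    E2 P s - E2 P { s with a2 := a, b2 := b, c2 := c, d2 := d } =
      (4 * P - 14) * (1 - a) / (24 * (P + 1)) := by
  have := h.pot_add_one_pos.ne'
  simp only [E2, h.a1_eq, h.b1_eq, h.c1_eq, h.d1_eq, h.a2_eq, h.b3_eq, h.c3_eq]
  field_simp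
  ring

lemma E2_update_le {a b c d : ℝ} (ha : a ∈ Icc (0 : ℝ) 1) :
    E2 P { s with a2 := a, b2 := b, c2 := c, d2 := d } ≤ E2 P s := by
  rw [← sub_nonneg, h.E2_sub_E2_update]
  have := h.pot_ge
  exact div_nonneg (mul_nonneg (by linarith) (by linarith [ha.2]))
    (by linarith [h.pot_add_one_pos])

lemma E3_sub_E3_update (b c d : ℝ) :
    E3 P s - E3 P { s with b3 := b, c3 := c, d3 := d } = 2 * c / (24 * (P + 1)) := by
  have := h.pot_add_one_pos.ne'
  simp only [E3, h.a1_eq, h.b1_eq, h.c1_eq, h.a2_eq, h.b2_eq, h.d2_eq, h.c3_eq]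
  field_simp
  ring

lemma E3_update_le {b c d : ℝ} (hc : c ∈ Icc (0 : ℝ) 1) :
    E3 P { s with b3 := b, c3 := c, d3 := d } ≤ E3 P s := by
  rw [← sub_nonneg, h.E3_sub_E3_update]
  exact div_nonneg (by linarith [hc.1]) (by linarith [h.pot_add_one_pos])

end IsSolution5

theorem solution_5_is_equilibrium_general (P : ℝ) (s : Profile)
    (hPl : 7 / 2 ≤ P)
    (ha1 : s.a1 = 0) (hb1 : s.b1 = 0)
    (ha2 : s.a2 = 1) (hb2 : s.b2 = 2 / (P + 1)) (hb3 : s.b3 = 2 / (P + 1))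
    (hc1 : s.c1 = 1) (hd2 : s.d2 = (P - 3) / (P + 1)) (hc3 : s.c3 = 0)
    (hd1 : s.d1 = (2 * P - 4) / (P + 1))
    (h23l : (2 * P - 4) / (P + 1) ≤ s.c2 + s.d3) (h23u : s.c2 + s.d3 ≤ 4 / (P + 1)) :
    IsEquilibrium P s := by
  have h : IsSolution5 P s :=
    ⟨hPl, ha1, hb1, hc1, hd1, ha2, hb2, hd2, hb3, hc3, h23l, h23u⟩
  exact ⟨fun _ _ _ _ ha hb hc _ => h.E1_update_le ha hb hc,
    fun _ _ _ _ ha _ _ _ => h.E2_update_le ha,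
    fun _ _ _ _ hc _ => h.E3_update_le hc⟩

theorem solution_5_is_equilibrium (P : ℝ) (s : Profile)
    (hPl : 7 / 2 ≤ P) (hPu : P ≤ 4) (hval : s.valid)
    (ha1 : s.a1 = 0) (hb1 : s.b1 = 0)
    (ha2 : s.a2 = 1) (hb2 : s.b2 = 2 / (P + 1)) (hb3 : s.b3 = 2 / (P + 1))
    (hc1 : s.c1 = 1) (hd2 : s.d2 = (P - 3) / (P + 1)) (hc3 : s.c3 = 0)
    (hd1 : s.d1 = (2 * P - 4) / (P + 1))
    (h23l : (2 * P - 4) / (P + 1) ≤ s.c2 + s.d3) (h23u : s.c2 + s.d3 ≤ 4 / (P + 1)) :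
    IsEquilibrium P s :=
  solution_5_is_equilibrium_general P s hPl ha1 hb1 ha2 hb2 hb3 hc1 hd2 hc3 hd1 h23l h23u
end

section
/- (Solution 7) In the simplified three-player full-street Kuhn poker game with pot size (3+√23)/2 ≤ P ≤ (7+√113)/4, the strategy profile with a₁ = 1/2, b₁ = 1/(P+1), a₂ = 1, b₂ = 2/(P+1), b₃ = (2P+1)/(P+1)², c₁ = 1, d₂ = (P−2)/(P+1), c₃ = (2P²−6P−7)/(P+1), d₁ = (4+8P−2P²)/(P+1), c₂ = 0 and d₃ = (2P−4)/(P+1) is an equilibrium. -/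
/-! Each player's expected profit is affine in her own frequencies, so a profile is an
equilibrium as soon as every frequency maximises, over `[0,1]`, its own term: the frequency
times its coefficient in its owner's profit. At Solution 7 all these coefficients vanish (each
player is kept indifferent) except three: those of `c₁` (`1/(P+1)`) and `a₂`
(`2(P²-P-1)/(P+1)²`) are nonnegative and `c₁ = a₂ = 1`, that of `c₂` (`-1/(P+1)`) is negative and
`c₂ = 0`. -/

open Set

section BestResponse

variable {k y : ℝ}

theorem isMaxOn_mul_of_eq_zero {s : Set ℝ} (hk : k = 0) : IsMaxOn (k * ·) s y :=
  isMaxOn_iff.2 fun x _ => by simp [hk]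

theorem isMaxOn_mul_Icc_one (hk : 0 ≤ k) : IsMaxOn (k * ·) (Icc 0 1) 1 :=
  isMaxOn_iff.2 fun _ hx => mul_le_mul_of_nonneg_left hx.2 hk

theorem isMaxOn_mul_Icc_zero (hk : k ≤ 0) : IsMaxOn (k * ·) (Icc 0 1) 0 :=
  isMaxOn_iff.2 fun _ hx => mul_le_mul_of_nonpos_left hx.1 hk

end BestResponse

theorem isEquilibrium_of_isMaxOn {P : ℝ} {s : Profile}
    (ha1 : IsMaxOn ((-2 * s.b2 + 2 * s.c2 - 2 * s.b3 + 2 * s.d3 - s.b2 * s.c3) * ·) (Icc 0 1) s.a1)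
    (hb1 : IsMaxOn ((2 * P - 4 - (P + 1) * (s.c2 + s.d3)) * ·) (Icc 0 1) s.b1)
    (hc1 : IsMaxOn ((s.b2 - 2 + (P + s.a2) * s.b3) * ·) (Icc 0 1) s.c1)
    (hd1 : IsMaxOn (((P + 1) * s.b2 - 2 * s.a2) * ·) (Icc 0 1) s.d1)
    (ha2 : IsMaxOn ((2 * s.d1 + 2 * s.c3 - 2 * s.b3 - s.c1 * s.b3 - s.b1 * s.c3) * ·)
      (Icc 0 1) s.a2)
    (hb2 : IsMaxOn ((2 * P - 4 + 2 * s.a1 - (P + 1) * (s.c3 + s.d1)) * ·) (Icc 0 1) s.b2)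
    (hc2 : IsMaxOn ((P * s.b1 - 2 * s.a1) * ·) (Icc 0 1) s.c2)
    (hd2 : IsMaxOn (((P + 1) * s.b3 - 2 + s.b1) * ·) (Icc 0 1) s.d2)
    (hb3 : IsMaxOn ((2 * P - 4 + 2 * s.a1 + 2 * s.a2 - (P + 1) * (s.c1 + s.d2)) * ·)
      (Icc 0 1) s.b3)
    (hc3 : IsMaxOn (((P + s.a1) * s.b2 - (2 - s.b1) * s.a2) * ·) (Icc 0 1) s.c3)
    (hd3 : IsMaxOn (((P + 1) * s.b1 - 2 * s.a1) * ·) (Icc 0 1) s.d3) :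
    IsEquilibrium P s := by
  refine ⟨fun a b c d ha hb hc hd => ?_, fun a b c d ha hb hc hd => ?_,
    fun b c d hb hc hd => ?_⟩
  · simp only [E1]
    linarith [isMaxOn_iff.1 ha1 a ha, isMaxOn_iff.1 hb1 b hb, isMaxOn_iff.1 hc1 c hc,
      isMaxOn_iff.1 hd1 d hd]
  · simp only [E2]
    linarith [isMaxOn_iff.1 ha2 a ha, isMaxOn_iff.1 hb2 b hb, isMaxOn_iff.1 hc2 c hc,
      isMaxOn_iff.1 hd2 d hd]
  · simp only [E3]
    linarith [isMaxOn_iff.1 hb3 b hb, isMaxOn_iff.1 hc3 c hc, isMaxOn_iff.1 hd3 d hd]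

noncomputable def solution7 (P : ℝ) : Profile where
  a1 := 1 / 2
  b1 := 1 / (P + 1)
  c1 := 1
  d1 := (4 + 8 * P - 2 * P ^ 2) / (P + 1)
  a2 := 1
  b2 := 2 / (P + 1)
  c2 := 0
  d2 := (P - 2) / (P + 1)
  b3 := (2 * P + 1) / (P + 1) ^ 2
  c3 := (2 * P ^ 2 - 6 * P - 7) / (P + 1)
  d3 := (2 * P - 4) / (P + 1)

theorem isEquilibrium_solution7 {P : ℝ} (hP : -1 < P) (hP' : P + 1 ≤ P ^ 2) :
    IsEquilibrium P (solution7 P) := by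
  have hP₀ : 0 < P + 1 := by linarith
  refine isEquilibrium_of_isMaxOn (isMaxOn_mul_of_eq_zero ?_) (isMaxOn_mul_of_eq_zero ?_)
    (isMaxOn_mul_Icc_one ?_) (isMaxOn_mul_of_eq_zero ?_) (isMaxOn_mul_Icc_one ?_)
    (isMaxOn_mul_of_eq_zero ?_) (isMaxOn_mul_Icc_zero ?_) (isMaxOn_mul_of_eq_zero ?_)
    (isMaxOn_mul_of_eq_zero ?_) (isMaxOn_mul_of_eq_zero ?_) (isMaxOn_mul_of_eq_zero ?_)
  all_goals
    simp only [solution7]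
    field_simp
    linarith

theorem solution_7_is_equilibrium_general (P : ℝ) (s : Profile)
    (hPl : (3 + Real.sqrt 23) / 2 ≤ P)
    (ha1 : s.a1 = 1 / 2) (hb1 : s.b1 = 1 / (P + 1))
    (ha2 : s.a2 = 1) (hb2 : s.b2 = 2 / (P + 1))
    (hb3 : s.b3 = (2 * P + 1) / (P + 1) ^ 2)
    (hc1 : s.c1 = 1) (hd2 : s.d2 = (P - 2) / (P + 1))
    (hc3 : s.c3 = (2 * P ^ 2 - 6 * P - 7) / (P + 1))
    (hd1 : s.d1 = (4 + 8 * P - 2 * P ^ 2) / (P + 1))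
    (hc2 : s.c2 = 0) (hd3 : s.d3 = (2 * P - 4) / (P + 1)) :
    IsEquilibrium P s := by
  have hP : 7 / 2 ≤ P := by
    have : (4 : ℝ) ≤ √23 := Real.le_sqrt_of_sq_le (by norm_num)
    linarith
  obtain rfl : s = solution7 P := by
    cases s
    simp only at *
    subst_vars
    rfl
  exact isEquilibrium_solution7 (by linarith) (by nlinarith)

theorem solution_7_is_equilibrium (P : ℝ) (s : Profile)
    (hPl : (3 + Real.sqrt 23) / 2 ≤ P) (hPu : P ≤ (7 + Real.sqrt 113) / 4)
    (hval : s.valid)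
    (ha1 : s.a1 = 1 / 2) (hb1 : s.b1 = 1 / (P + 1))
    (ha2 : s.a2 = 1) (hb2 : s.b2 = 2 / (P + 1))
    (hb3 : s.b3 = (2 * P + 1) / (P + 1) ^ 2)
    (hc1 : s.c1 = 1) (hd2 : s.d2 = (P - 2) / (P + 1))
    (hc3 : s.c3 = (2 * P ^ 2 - 6 * P - 7) / (P + 1))
    (hd1 : s.d1 = (4 + 8 * P - 2 * P ^ 2) / (P + 1))
    (hc2 : s.c2 = 0) (hd3 : s.d3 = (2 * P - 4) / (P + 1)) :
    IsEquilibrium P s :=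
  solution_7_is_equilibrium_general P s hPl ha1 hb1 ha2 hb2 hb3 hc1 hd2 hc3 hd1 hc2 hd3
end

section
/- (Solution 8) In the simplified three-player full-street Kuhn poker game with pot size (7+√105)/4 ≤ P ≤ (7+√113)/4, the strategy profile with a₁ = (9−2P)(P+1)/2, b₁ = 9−2P, a₂ = 1, b₂ = 2/(P+1), b₃ = (2P−7)/(P+1), c₁ = 1, d₂ = (6+8P−2P²)/(P+1), c₃ = 1, d₁ = (4+8P−2P²)/(P+1), c₂ = 0 and d₃ = (2P−4)/(P+1) is an equilibrium. -/
/-!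
Each player's expected profit is affine in each of her own frequencies. At this profile the
coefficients of all frequencies a player mixes on vanish, so she is indifferent to them, and the
remaining coefficients have the sign that makes her pure choices optimal (c₁ = 1; a₂ = 1, c₂ = 0;
c₃ = 1). Those signs are governed by 2P² − 7P − 7 ≥ 0 and 2P² − 7P − 8 ≤ 0, whose positive roots
are (7 + √105)/4 and (7 + √113)/4.
-/

open Real

theorem four_mul_quadratic_eq_mul {a b c x : ℝ} (hdisc : 0 ≤ b ^ 2 + 4 * a * c) :
    4 * a * (a * x ^ 2 - b * x - c)
      = (2 * a * x - b - √(b ^ 2 + 4 * a * c)) * (2 * a * x - b + √(b ^ 2 + 4 * a * c)) := by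
  linear_combination sq_sqrt hdisc

theorem quadratic_nonneg_of_root_le {a b c x : ℝ} (ha : 0 < a) (hdisc : 0 ≤ b ^ 2 + 4 * a * c)
    (hx : (b + √(b ^ 2 + 4 * a * c)) / (2 * a) ≤ x) : 0 ≤ a * x ^ 2 - b * x - c := by
  have hroot : b + √(b ^ 2 + 4 * a * c) ≤ 2 * a * x := by
    rw [div_le_iff₀ (by positivity)] at hx; linarith
  have hprod : 0 ≤ 4 * a * (a * x ^ 2 - b * x - c) := by
    rw [four_mul_quadratic_eq_mul hdisc]
    exact mul_nonneg (by linarith) (by linarith [sqrt_nonneg (b ^ 2 + 4 * a * c)])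
  exact nonneg_of_mul_nonneg_right hprod (by positivity)

theorem quadratic_nonpos_of_le_root {a b c x : ℝ} (ha : 0 < a) (hc : 0 ≤ c) (hx0 : 0 ≤ x)
    (hx : x ≤ (b + √(b ^ 2 + 4 * a * c)) / (2 * a)) : a * x ^ 2 - b * x - c ≤ 0 := by
  have hdisc : 0 ≤ b ^ 2 + 4 * a * c := by positivity
  have hroot : 2 * a * x ≤ b + √(b ^ 2 + 4 * a * c) := by
    rw [le_div_iff₀ (by positivity)] at hx; linarith
  -- the smaller root (b - √(b² + 4ac)) / (2a) is at most 0 ≤ x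
  have hb : b ≤ √(b ^ 2 + 4 * a * c) := (le_abs_self b).trans (abs_le_sqrt (by nlinarith))
  have hprod : 4 * a * (a * x ^ 2 - b * x - c) ≤ 0 := by
    rw [four_mul_quadratic_eq_mul hdisc]
    exact mul_nonpos_of_nonpos_of_nonneg (by linarith)
      (by linarith [show 0 ≤ 2 * a * x by positivity])
  exact nonpos_of_mul_nonpos_right hprod (by positivity)

noncomputable def solution8 (P : ℝ) : Profile where
  a1 := (9 - 2 * P) * (P + 1) / 2
  b1 := 9 - 2 * P
  c1 := 1
  d1 := (4 + 8 * P - 2 * P ^ 2) / (P + 1)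
  a2 := 1
  b2 := 2 / (P + 1)
  c2 := 0
  d2 := (6 + 8 * P - 2 * P ^ 2) / (P + 1)
  b3 := (2 * P - 7) / (P + 1)
  c3 := 1
  d3 := (2 * P - 4) / (P + 1)

section solution8

variable {P : ℝ}

theorem E1_solution8_deviation (hP : P + 1 ≠ 0) (a b c d : ℝ) :
    E1 P { solution8 P with a1 := a, b1 := b, c1 := c, d1 := d }
      = E1 P (solution8 P) + (2 * P ^ 2 - 7 * P - 7) / (24 * (P + 1)) * (c - 1) := by
  simp only [E1, solution8]
  field_simp
  ring

theorem E2_solution8_deviation (hP : P + 1 ≠ 0) (a b c d : ℝ) :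
    E2 P { solution8 P with a2 := a, b2 := b, c2 := c, d2 := d }
      = E2 P (solution8 P) - (2 * P ^ 2 - 5 * P - 22) / (24 * (P + 1)) * (a - 1)
        - (9 - 2 * P) / 24 * c := by
  simp only [E2, solution8]
  field_simp
  ring

theorem E3_solution8_deviation (hP : P + 1 ≠ 0) (b c d : ℝ) :
    E3 P { solution8 P with b3 := b, c3 := c, d3 := d }
      = E3 P (solution8 P) - (2 * P ^ 2 - 7 * P - 8) / (12 * (P + 1)) * (c - 1) := by
  simp only [E3, solution8]
  field_simp
  ring

theorem solution8_isEquilibrium (hP : 0 ≤ P) (hlow : 0 ≤ 2 * P ^ 2 - 7 * P - 7)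
    (hup : 2 * P ^ 2 - 7 * P - 8 ≤ 0) : IsEquilibrium P (solution8 P) := by
  have hP1 : 0 < P + 1 := by linarith
  have hb1_nonneg : 0 ≤ 9 - 2 * P := by nlinarith
  have ha2_coeff : 2 * P ^ 2 - 5 * P - 22 ≤ 0 := by nlinarith
  refine ⟨fun a b c d _ _ hc _ => ?_, fun a b c d ha _ hc _ => ?_, fun b c d _ hc _ => ?_⟩
  · rw [E1_solution8_deviation hP1.ne']
    have : 0 ≤ (2 * P ^ 2 - 7 * P - 7) / (24 * (P + 1)) := by positivity
    nlinarith [hc.2]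
  · rw [E2_solution8_deviation hP1.ne']
    have : (2 * P ^ 2 - 5 * P - 22) / (24 * (P + 1)) ≤ 0 :=
      div_nonpos_of_nonpos_of_nonneg ha2_coeff (by positivity)
    nlinarith [ha.2, hc.1]
  · rw [E3_solution8_deviation hP1.ne']
    have : (2 * P ^ 2 - 7 * P - 8) / (12 * (P + 1)) ≤ 0 :=
      div_nonpos_of_nonpos_of_nonneg hup (by positivity)
    nlinarith [hc.2]

end solution8

theorem solution_8_is_equilibrium_general (P : ℝ) (s : Profile)
    (hPl : (7 + Real.sqrt 105) / 4 ≤ P) (hPu : P ≤ (7 + Real.sqrt 113) / 4)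
    (ha1 : s.a1 = (9 - 2 * P) * (P + 1) / 2) (hb1 : s.b1 = 9 - 2 * P)
    (ha2 : s.a2 = 1) (hb2 : s.b2 = 2 / (P + 1)) (hb3 : s.b3 = (2 * P - 7) / (P + 1))
    (hc1 : s.c1 = 1) (hd2 : s.d2 = (6 + 8 * P - 2 * P ^ 2) / (P + 1)) (hc3 : s.c3 = 1)
    (hd1 : s.d1 = (4 + 8 * P - 2 * P ^ 2) / (P + 1))
    (hc2 : s.c2 = 0) (hd3 : s.d3 = (2 * P - 4) / (P + 1)) :
    IsEquilibrium P s := by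
  have hs : s = solution8 P := by
    cases s
    simp_all only [solution8]
  subst hs
  have hP : 0 ≤ P := le_trans (by positivity) hPl
  exact solution8_isEquilibrium hP
    (quadratic_nonneg_of_root_le (b := 7) (c := 7) two_pos (by norm_num) (by norm_num; exact hPl))
    (quadratic_nonpos_of_le_root (b := 7) (c := 8) two_pos (by norm_num) hP (by norm_num; exact hPu))

theorem solution_8_is_equilibrium (P : ℝ) (s : Profile)
    (hPl : (7 + Real.sqrt 105) / 4 ≤ P) (hPu : P ≤ (7 + Real.sqrt 113) / 4)
    (hval : s.valid)
    (ha1 : s.a1 = (9 - 2 * P) * (P + 1) / 2) (hb1 : s.b1 = 9 - 2 * P)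
    (ha2 : s.a2 = 1) (hb2 : s.b2 = 2 / (P + 1)) (hb3 : s.b3 = (2 * P - 7) / (P + 1))
    (hc1 : s.c1 = 1) (hd2 : s.d2 = (6 + 8 * P - 2 * P ^ 2) / (P + 1)) (hc3 : s.c3 = 1)
    (hd1 : s.d1 = (4 + 8 * P - 2 * P ^ 2) / (P + 1))
    (hc2 : s.c2 = 0) (hd3 : s.d3 = (2 * P - 4) / (P + 1)) :
    IsEquilibrium P s :=
  solution_8_is_equilibrium_general P s hPl hPu ha1 hb1 ha2 hb2 hb3 hc1 hd2 hc3 hd1 hc2 hd3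
end

section
/- (Solution 2a with profits) In the simplified three-player full-street Kuhn poker game with pot size P = 3, every strategy profile with a₁ = b₁ = 0, b₂ = a₂/2, a₂ ≤ 1/2, b₃ = 1/2, c₁ = 0, d₂ = (1+a₂)/2, c₃ = 0, d₁ = 1/2 and 1/2 ≤ c₂ + d₃ ≤ 1/2 + b₂ is an equilibrium, and at any such profile the expected profits satisfy 24E₁ = −1/2 − a₂/2, 24E₂ = −1/2 and 24E₃ = 1 + a₂/2; in particular Player 2's choice of a₂ transfers profit between Players 1 and 3 at no cost to herself. -/
/-! At this profile each player's profit is affine in her own frequencies. Each coefficient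
either vanishes or has the sign that makes the prescribed value `0` a best response; the
indifference conditions are what pin down `b₂`, `d₁`, `d₂` and `b₃`. All of player 2's
coefficients vanish, so her profit is `-1/48` whatever she plays, and `a₂` moves profit between
players 1 and 3 at no cost to her. -/

lemma E1_three_eq (s : Profile) (hb2 : s.b2 = s.a2 / 2) (hb3 : s.b3 = 1 / 2) (hc3 : s.c3 = 0) :
    24 * E1 3 s = (2 * (s.c2 + s.d3) - 1 - s.a2) * s.a1 + (2 - 4 * (s.c2 + s.d3)) * s.b1
      + (s.a2 - 1 / 2) * s.c1 - 1 / 2 - s.a2 / 2 := by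
  rw [E1, hb2, hb3, hc3]
  ring

lemma E1_three_le (s : Profile) (hb2 : s.b2 = s.a2 / 2) (hb3 : s.b3 = 1 / 2) (hc3 : s.c3 = 0)
    (ha2 : s.a2 ≤ 1 / 2) (h23l : 1 / 2 ≤ s.c2 + s.d3) (h23u : s.c2 + s.d3 ≤ 1 / 2 + s.b2)
    (ha1 : 0 ≤ s.a1) (hb1 : 0 ≤ s.b1) (hc1 : 0 ≤ s.c1) :
    24 * E1 3 s ≤ -(1 / 2) - s.a2 / 2 := by
  have hA : (2 * (s.c2 + s.d3) - 1 - s.a2) * s.a1 ≤ 0 :=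
    mul_nonpos_of_nonpos_of_nonneg (by linarith) ha1
  have hB : (2 - 4 * (s.c2 + s.d3)) * s.b1 ≤ 0 := mul_nonpos_of_nonpos_of_nonneg (by linarith) hb1
  have hC : (s.a2 - 1 / 2) * s.c1 ≤ 0 := mul_nonpos_of_nonpos_of_nonneg (by linarith) hc1
  rw [E1_three_eq s hb2 hb3 hc3]
  linarith

lemma E2_three_eq (s : Profile) (ha1 : s.a1 = 0) (hb1 : s.b1 = 0) (hc1 : s.c1 = 0)
    (hd1 : s.d1 = 1 / 2) (hb3 : s.b3 = 1 / 2) (hc3 : s.c3 = 0) :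
    24 * E2 3 s = -(1 / 2) := by
  rw [E2, ha1, hb1, hc1, hd1, hb3, hc3]
  ring

lemma E3_three_eq (s : Profile) (ha1 : s.a1 = 0) (hb1 : s.b1 = 0) (hc1 : s.c1 = 0)
    (hb2 : s.b2 = s.a2 / 2) (hd2 : s.d2 = (1 + s.a2) / 2) :
    24 * E3 3 s = 1 + s.a2 / 2 - s.a2 / 2 * s.c3 := by
  rw [E3, ha1, hb1, hc1, hb2, hd2]
  ring

theorem solution_2a_is_equilibrium_with_profits (P : ℝ) (s : Profile)
    (hP : P = 3) (hval : s.valid)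
    (ha1 : s.a1 = 0) (hb1 : s.b1 = 0)
    (hb2 : s.b2 = s.a2 / 2) (ha2 : s.a2 ≤ 1 / 2) (hb3 : s.b3 = 1 / 2)
    (hc1 : s.c1 = 0) (hd2 : s.d2 = (1 + s.a2) / 2) (hc3 : s.c3 = 0)
    (hd1 : s.d1 = 1 / 2)
    (h23l : 1 / 2 ≤ s.c2 + s.d3) (h23u : s.c2 + s.d3 ≤ 1 / 2 + s.b2) :
    IsEquilibrium P s ∧
      24 * E1 P s = -(1 / 2) - s.a2 / 2 ∧
      24 * E2 P s = -(1 / 2) ∧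
      24 * E3 P s = 1 + s.a2 / 2 := by
  subst hP
  have ha2_nonneg : 0 ≤ s.a2 := hval.2.2.2.2.1.1
  have profit1 : 24 * E1 3 s = -(1 / 2) - s.a2 / 2 := by
    rw [E1_three_eq s hb2 hb3 hc3, ha1, hb1, hc1]
    ring
  have profit2 := E2_three_eq s ha1 hb1 hc1 hd1 hb3 hc3
  have profit3 : 24 * E3 3 s = 1 + s.a2 / 2 := by
    rw [E3_three_eq s ha1 hb1 hc1 hb2 hd2, hc3]
    ring
  refine ⟨⟨?_, ?_, ?_⟩, profit1, profit2, profit3⟩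
  · intro a b c d ha hb hc _
    have deviation := E1_three_le { s with a1 := a, b1 := b, c1 := c, d1 := d } hb2 hb3 hc3 ha2 h23l h23u
      ha.1 hb.1 hc.1
    dsimp only at deviation
    linarith
  · intro a b c d _ _ _ _
    have deviation := E2_three_eq { s with a2 := a, b2 := b, c2 := c, d2 := d } ha1 hb1 hc1 hd1 hb3 hc3
    linarith
  · intro b c d _ hc _
    have deviation := E3_three_eq { s with b3 := b, c3 := c, d3 := d } ha1 hb1 hc1 hb2 hd2
    dsimp only at deviation
    linarith [mul_nonneg ha2_nonneg hc.1]
end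

section
/- (Uniqueness for 2 < P < 3) In the simplified three-player full-street Kuhn poker game with pot size P satisfying 2 < P < 3, every equilibrium strategy profile satisfies a₁ = b₁ = a₂ = b₂ = 0, b₃ = 2/(P+1), c₁ = 0, d₂ = (2P−4)/(P+1), (2P−4)/(P+1) ≤ c₃ + d₁ ≤ 2/(P+1) and (2P−4)/(P+1) ≤ c₂ + d₃ ≤ 2/(P+1); that is, the equilibria are exactly those of Solution 1. -/
/-!
Every payoff is affine in each of its own player's frequencies, so at an equilibrium each
frequency maximises `y ↦ c * y` on `[0, 1]` for its coefficient `c`: it is `0` if `c < 0`, `1` if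
`c > 0`, and `c = 0` if it is strictly mixed. Chasing these sign conditions, `b₃` is strictly
mixed, which pins `(P + 1)(c₁ + d₂)`. If `b₁ > 0`, player 1 is indifferent on `b₁` and `d₃`,
and the resulting bounds on `b₂, b₃` contradict player 2's conditions on `a₂, b₂` when `P < 3`.
Then `a₁ = 0`; `b₂ > 0` fails by a concavity estimate in `a₂`; `a₂ = 0`; and player 2's
condition on `d₂` forces `(P + 1) b₃ = 2`, from which the remaining values and bounds follow.
-/

open Set

def IsBestResponse (c x : ℝ) : Prop :=
  x ∈ Icc (0 : ℝ) 1 ∧ ∀ y ∈ Icc (0 : ℝ) 1, c * y ≤ c * x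

namespace IsBestResponse

variable {c x : ℝ}

theorem nonneg (h : IsBestResponse c x) : 0 ≤ x := h.1.1

theorem le_one (h : IsBestResponse c x) : x ≤ 1 := h.1.2

theorem coeff_nonneg (h : IsBestResponse c x) (hx : 0 < x) : 0 ≤ c := by
  have := h.2 0 (left_mem_Icc.2 zero_le_one)
  rw [mul_zero] at this
  exact nonneg_of_mul_nonneg_left this hx

theorem coeff_nonpos (h : IsBestResponse c x) (hx : x < 1) : c ≤ 0 := by
  have := h.2 1 (right_mem_Icc.2 zero_le_one)
  nlinarith

theorem coeff_eq_zero (h : IsBestResponse c x) (h0 : 0 < x) (h1 : x < 1) : c = 0 :=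
  le_antisymm (h.coeff_nonpos h1) (h.coeff_nonneg h0)

theorem eq_zero_of_coeff_neg (h : IsBestResponse c x) (hc : c < 0) : x = 0 :=
  h.nonneg.eq_of_not_lt' fun hx => hc.not_ge (h.coeff_nonneg hx)

theorem eq_one_of_coeff_pos (h : IsBestResponse c x) (hc : 0 < c) : x = 1 :=
  h.le_one.eq_of_not_lt fun hx => hc.not_ge (h.coeff_nonpos hx)

end IsBestResponse

/-- Each field is a frequency with its coefficient in `24 E₁`, `24 E₂` or `24 E₃`. -/
structure Profile.BestResponses (P : ℝ) (s : Profile) : Prop where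
  a1 : IsBestResponse (-2 * s.b2 + 2 * s.c2 - 2 * s.b3 + 2 * s.d3 - s.b2 * s.c3) s.a1
  b1 : IsBestResponse (2 * P - 4 - (P + 1) * (s.c2 + s.d3)) s.b1
  c1 : IsBestResponse (s.b2 - 2 + (P + s.a2) * s.b3) s.c1
  d1 : IsBestResponse ((P + 1) * s.b2 - 2 * s.a2) s.d1
  a2 : IsBestResponse (2 * s.d1 + 2 * s.c3 - 2 * s.b3 - s.c1 * s.b3 - s.b1 * s.c3) s.a2
  b2 : IsBestResponse (2 * P - 4 + 2 * s.a1 - (P + 1) * (s.c3 + s.d1)) s.b2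
  c2 : IsBestResponse (P * s.b1 - 2 * s.a1) s.c2
  d2 : IsBestResponse ((P + 1) * s.b3 - 2 + s.b1) s.d2
  b3 : IsBestResponse (2 * P - 4 + 2 * s.a1 + 2 * s.a2 - (P + 1) * (s.c1 + s.d2)) s.b3
  c3 : IsBestResponse ((P + s.a1) * s.b2 - (2 - s.b1) * s.a2) s.c3
  d3 : IsBestResponse ((P + 1) * s.b1 - 2 * s.a1) s.d3

theorem IsEquilibrium.bestResponses {P : ℝ} {s : Profile} (heq : IsEquilibrium P s)
    (hs : s.valid) : s.BestResponses P := by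
  obtain ⟨ha1, hb1, hc1, hd1, ha2, hb2, hc2, hd2, hb3, hc3, hd3⟩ := hs
  obtain ⟨h1, h2, h3⟩ := heq
  simp only [E1, E2, E3] at h1 h2 h3
  exact
    { a1 := ⟨ha1, fun y hy => by linarith [h1 y _ _ _ hy hb1 hc1 hd1]⟩
      b1 := ⟨hb1, fun y hy => by linarith [h1 _ y _ _ ha1 hy hc1 hd1]⟩
      c1 := ⟨hc1, fun y hy => by linarith [h1 _ _ y _ ha1 hb1 hy hd1]⟩
      d1 := ⟨hd1, fun y hy => by linarith [h1 _ _ _ y ha1 hb1 hc1 hy]⟩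
      a2 := ⟨ha2, fun y hy => by linarith [h2 y _ _ _ hy hb2 hc2 hd2]⟩
      b2 := ⟨hb2, fun y hy => by linarith [h2 _ y _ _ ha2 hy hc2 hd2]⟩
      c2 := ⟨hc2, fun y hy => by linarith [h2 _ _ y _ ha2 hb2 hy hd2]⟩
      d2 := ⟨hd2, fun y hy => by linarith [h2 _ _ _ y ha2 hb2 hc2 hy]⟩
      b3 := ⟨hb3, fun y hy => by linarith [h3 y _ _ hy hc3 hd3]⟩
      c3 := ⟨hc3, fun y hy => by linarith [h3 _ y _ hb3 hy hd3]⟩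
      d3 := ⟨hd3, fun y hy => by linarith [h3 _ _ y hb3 hc3 hy]⟩ }

namespace Profile.BestResponses

variable {P : ℝ} {s : Profile}

theorem b3_pos (h : s.BestResponses P) (hP : 2 < P) : 0 < s.b3 := by
  refine h.b3.nonneg.lt_of_ne fun hb3 => ?_
  have hd2 : s.d2 = 0 := h.d2.eq_zero_of_coeff_neg (by rw [← hb3]; linarith [h.b1.le_one])
  have hc1 : s.c1 = 0 := h.c1.eq_zero_of_coeff_neg (by rw [← hb3]; linarith [h.b2.le_one])
  have : s.b3 = 1 :=
    h.b3.eq_one_of_coeff_pos (by rw [hd2, hc1]; linarith [h.a1.nonneg, h.a2.nonneg])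
  linarith

theorem b3_lt_one (h : s.BestResponses P) (hP2 : 2 < P) (hP3 : P < 3) : s.b3 < 1 := by
  refine h.b3.le_one.lt_of_ne fun hb3 => ?_
  have hd2 : s.d2 = 1 := h.d2.eq_one_of_coeff_pos (by rw [hb3]; linarith [h.b1.nonneg])
  have hB3 := h.b3.coeff_nonneg (h.b3_pos hP2)
  have ha1 : 0 < s.a1 := by
    rw [hd2] at hB3; nlinarith [h.c1.nonneg, h.a2.le_one]
  have hc2d3 : 1 ≤ s.c2 + s.d3 := by
    have hA1 := h.a1.coeff_nonneg ha1
    rw [hb3] at hA1; nlinarith [mul_nonneg h.b2.nonneg h.c3.nonneg, h.b2.nonneg]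
  have hb1 : s.b1 = 0 := h.b1.eq_zero_of_coeff_neg (by nlinarith)
  have hd3 : s.d3 = 0 := h.d3.eq_zero_of_coeff_neg (by rw [hb1]; linarith)
  have hC2 := h.c2.coeff_nonneg (by linarith : 0 < s.c2)
  rw [hb1] at hC2; linarith

theorem b3_indifference (h : s.BestResponses P) (hP2 : 2 < P) (hP3 : P < 3) :
    (P + 1) * (s.c1 + s.d2) = 2 * P - 4 + 2 * s.a1 + 2 * s.a2 := by
  linarith [h.b3.coeff_eq_zero (h.b3_pos hP2) (h.b3_lt_one hP2 hP3)]

theorem b1_pos_indifference (h : s.BestResponses P) (hP2 : 2 < P) (hP3 : P < 3)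
    (hb1 : 0 < s.b1) : (P + 1) * s.b1 = 2 * s.a1 ∧ s.c2 = 0 ∧ (P + 1) * s.d3 = 2 * P - 4 := by
  have hB1 := h.b1.coeff_nonneg hb1
  have hD3 := h.d3.coeff_nonpos (by nlinarith [h.c2.nonneg])
  have hc2 : s.c2 = 0 := h.c2.eq_zero_of_coeff_neg (by linarith)
  have hd3 : (P + 1) * s.d3 = 2 * P - 4 := by
    have := h.b1.coeff_eq_zero hb1 (by nlinarith [h.a1.le_one])
    rw [hc2] at this; linarith
  have hd3_pos : 0 < s.d3 := by nlinarith
  exact ⟨by linarith [h.d3.coeff_nonneg hd3_pos], hc2, hd3⟩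

theorem b1_eq_zero (h : s.BestResponses P) (hP2 : 2 < P) (hP3 : P < 3) : s.b1 = 0 := by
  by_contra hne
  have hb1 : 0 < s.b1 := h.b1.nonneg.lt_of_ne' hne
  have hP1 : 0 < P + 1 := by linarith
  obtain ⟨hD3, hc2, hd3⟩ := h.b1_pos_indifference hP2 hP3 hb1
  have ha1 : 0 < s.a1 := by nlinarith
  have hb3b2 : (P + 1) * (s.b3 + s.b2) ≤ 2 * P - 4 := by
    have hA1 := h.a1.coeff_nonneg ha1
    rw [hc2] at hA1
    nlinarith [mul_nonneg hP1.le hA1, mul_nonneg (mul_nonneg hP1.le h.b2.nonneg) h.c3.nonneg]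
  have hc1 : s.c1 = 0 := h.c1.eq_zero_of_coeff_neg (by
    nlinarith [mul_nonneg (sub_nonneg.2 h.a2.le_one) h.b3.nonneg,
      mul_nonneg (by linarith : (0 : ℝ) ≤ P) h.b2.nonneg])
  have hd2 : (P + 1) * s.d2 = 2 * P - 4 + 2 * s.a1 + 2 * s.a2 := by
    have := h.b3_indifference hP2 hP3
    rw [hc1] at this; linarith
  have hD2 := h.d2.coeff_nonneg (by nlinarith [h.a2.nonneg])
  have hb1_ge : 6 - 2 * P ≤ s.b1 := by nlinarith [mul_nonneg hP1.le h.b2.nonneg]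
  have hA2 := h.a2.coeff_nonpos (by
    nlinarith [mul_nonneg hP1.le (sub_nonneg.2 hb1_ge),
      mul_nonneg hP1.le (sub_nonneg.2 h.d2.le_one),
      mul_pos (by linarith : (0 : ℝ) < 2 * P + 1) (sub_pos.2 hP3)])
  have hB2 := h.b2.coeff_nonpos (by nlinarith [mul_nonneg hP1.le h.b3.nonneg])
  rw [hc1] at hA2
  -- Scaling `hA2` by `P + 1` and adding `hB2` and `hb3b2` gives `(P + 1) b₁ ≤ -2 (P + 1) b₂`.
  nlinarith [mul_pos hP1 hb1, mul_nonneg hP1.le h.b2.nonneg, mul_nonneg hP1.le (neg_nonneg.2 hA2),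
    mul_nonneg (mul_nonneg hP1.le h.b1.nonneg) (sub_nonneg.2 h.c3.le_one)]

theorem a1_eq_zero (h : s.BestResponses P) (hP : 2 < P) (hb1 : s.b1 = 0) : s.a1 = 0 := by
  by_contra hne
  have ha1 : 0 < s.a1 := h.a1.nonneg.lt_of_ne' hne
  have hc2 : s.c2 = 0 := h.c2.eq_zero_of_coeff_neg (by rw [hb1]; linarith)
  have hd3 : s.d3 = 0 := h.d3.eq_zero_of_coeff_neg (by rw [hb1]; linarith)
  have hA1 := h.a1.coeff_nonneg ha1
  rw [hc2, hd3] at hA1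
  nlinarith [h.b3_pos hP, h.b2.nonneg, mul_nonneg h.b2.nonneg h.c3.nonneg]

theorem a2_eq_zero (h : s.BestResponses P) (hP : 2 < P) (hb2 : s.b2 = 0) : s.a2 = 0 := by
  by_contra hne
  have ha2 : 0 < s.a2 := h.a2.nonneg.lt_of_ne' hne
  have hd1 : s.d1 = 0 := h.d1.eq_zero_of_coeff_neg (by rw [hb2]; linarith)
  have hc3 : s.c3 = 0 := h.c3.eq_zero_of_coeff_neg (by
    rw [hb2]; nlinarith [mul_pos (by linarith [h.b1.le_one] : 0 < 2 - s.b1) ha2])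
  have hA2 := h.a2.coeff_nonneg ha2
  rw [hd1, hc3] at hA2
  nlinarith [h.b3_pos hP, mul_nonneg h.c1.nonneg h.b3.nonneg]

theorem b2_eq_zero (h : s.BestResponses P) (hP2 : 2 < P) (hP3 : P < 3) (ha1 : s.a1 = 0)
    (hb1 : s.b1 = 0) : s.b2 = 0 := by
  by_contra hne
  have hb2 : 0 < s.b2 := h.b2.nonneg.lt_of_ne' hne
  have hP1 : 0 < P + 1 := by linarith
  have hB2 := h.b2.coeff_nonneg hb2
  rw [ha1] at hB2
  have hD1 := h.d1.coeff_nonpos (by nlinarith [h.c3.nonneg])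
  have ha2 : 0 < s.a2 := by nlinarith [mul_pos hP1 hb2]
  have hA2 := h.a2.coeff_nonneg ha2
  rw [hb1] at hA2
  have hb3c1 : (P + 1) * s.b3 * (2 + s.c1) ≤ 2 * (2 * P - 4) := by
    nlinarith [mul_nonneg hP1.le hA2]
  have hd2 : s.d2 = 0 := h.d2.eq_zero_of_coeff_neg (by
    rw [hb1]; nlinarith [mul_nonneg (mul_nonneg hP1.le h.b3.nonneg) h.c1.nonneg])
  have hc1 : (P + 1) * s.c1 = 2 * P - 4 + 2 * s.a2 := by
    have := h.b3_indifference hP2 hP3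
    rw [ha1, hd2] at this; linarith
  have hC1 := h.c1.coeff_nonneg (by nlinarith)
  have hb3 : s.b3 * (4 * P - 2 + 2 * s.a2) ≤ 2 * (2 * P - 4) := by
    linear_combination hb3c1 - s.b3 * hc1
  have key : (P + 1 - s.a2) * (2 * P - 1 + s.a2) ≤ (P + 1) * (P + s.a2) * (P - 2) := by
    have : 0 ≤ 2 * P - 1 + s.a2 := by linarith
    calc (P + 1 - s.a2) * (2 * P - 1 + s.a2)
        ≤ (P + 1) * (2 - s.b2) / 2 * (2 * P - 1 + s.a2) := by gcongr; linarith
      _ ≤ (P + 1) * ((P + s.a2) * s.b3) / 2 * (2 * P - 1 + s.a2) := by gcongr; linarith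
      _ = (P + 1) * (P + s.a2) * (s.b3 * (4 * P - 2 + 2 * s.a2)) / 4 := by ring
      _ ≤ (P + 1) * (P + s.a2) * (2 * (2 * P - 4)) / 4 := by gcongr
      _ = (P + 1) * (P + s.a2) * (P - 2) := by ring
  -- The difference of the two sides of `key` is concave in `a₂`, and positive at `a₂ = 0, 1`.
  nlinarith [mul_pos (sub_pos.2 hP2) (sub_pos.2 hP3),
    mul_nonneg h.a2.nonneg (sub_nonneg.2 h.a2.le_one),
    mul_nonneg (mul_nonneg h.a2.nonneg (sub_nonneg.2 h.a2.le_one)) (sub_pos.2 hP2).le]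

theorem add_one_mul_b3_eq_two (h : s.BestResponses P) (hP2 : 2 < P) (hP3 : P < 3) (ha1 : s.a1 = 0)
    (ha2 : s.a2 = 0) (hb1 : s.b1 = 0) (hb2 : s.b2 = 0) : (P + 1) * s.b3 = 2 := by
  have hind := h.b3_indifference hP2 hP3
  rw [ha1, ha2] at hind
  rcases lt_trichotomy ((P + 1) * s.b3) 2 with hlt | heq | hgt
  · have hd2 : s.d2 = 0 := h.d2.eq_zero_of_coeff_neg (by rw [hb1]; linarith)
    have hC1 := h.c1.coeff_nonneg (by rw [hd2] at hind; nlinarith)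
    rw [hb2, ha2] at hC1
    nlinarith [h.b3_pos hP2]
  · exact heq
  · have hd2 : s.d2 = 1 := h.d2.eq_one_of_coeff_pos (by rw [hb1]; linarith)
    rw [hd2] at hind
    nlinarith [h.c1.nonneg]

end Profile.BestResponses

theorem equilibrium_unique_for_small_pot (P : ℝ) (s : Profile)
    (hP2 : 2 < P) (hP3 : P < 3) (hval : s.valid) (heq : IsEquilibrium P s) :
    s.a1 = 0 ∧ s.b1 = 0 ∧ s.a2 = 0 ∧ s.b2 = 0 ∧
      s.b3 = 2 / (P + 1) ∧ s.c1 = 0 ∧ s.d2 = (2 * P - 4) / (P + 1) ∧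
      (2 * P - 4) / (P + 1) ≤ s.c3 + s.d1 ∧ s.c3 + s.d1 ≤ 2 / (P + 1) ∧
      (2 * P - 4) / (P + 1) ≤ s.c2 + s.d3 ∧ s.c2 + s.d3 ≤ 2 / (P + 1) := by
  have h := heq.bestResponses hval
  have hP1 : 0 < P + 1 := by linarith
  have hb1 := h.b1_eq_zero hP2 hP3
  have ha1 := h.a1_eq_zero hP2 hb1
  have hb2 := h.b2_eq_zero hP2 hP3 ha1 hb1
  have ha2 := h.a2_eq_zero hP2 hb2
  have hb3 := h.add_one_mul_b3_eq_two hP2 hP3 ha1 ha2 hb1 hb2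
  have hb3' : s.b3 = 2 / (P + 1) := eq_div_of_mul_eq hP1.ne' (by linarith)
  have hc1 : s.c1 = 0 := h.c1.eq_zero_of_coeff_neg (by rw [hb2, ha2]; linarith [h.b3_pos hP2])
  have hd2 := h.b3_indifference hP2 hP3
  rw [ha1, ha2, hc1] at hd2
  have hA1 := h.a1.coeff_nonpos (ha1 ▸ zero_lt_one)
  have hB1 := h.b1.coeff_nonpos (hb1 ▸ zero_lt_one)
  have hA2 := h.a2.coeff_nonpos (ha2 ▸ zero_lt_one)
  have hB2 := h.b2.coeff_nonpos (hb2 ▸ zero_lt_one)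
  rw [hb2] at hA1
  rw [hb1, hc1] at hA2
  refine ⟨ha1, hb1, ha2, hb2, hb3', hc1, eq_div_of_mul_eq hP1.ne' (by linarith), ?_, ?_, ?_, ?_⟩
  · rw [div_le_iff₀ hP1]; linarith
  · rw [← hb3']; linarith
  · rw [div_le_iff₀ hP1]; linarith
  · rw [← hb3']; linarith
end
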